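/- If both roots λ of λ² + dξ²λ − aξ² = 0 for all real ξ ≠ 0 satisfy Re λ ≤ −θ ξ² for some θ > 0, then necessarily d > 0 and a ≤ 0; conversely if d > 0 and a < 0, then for all sufficiently small ξ ≠ 0 both roots satisfy Re λ(ξ) ≤ −(d/4) ξ². -/
import Mathlib


/-- Diffusive spectral stability for the dispersion relation
`λ² + dξ²λ − aξ² = 0`: if both roots satisfy `Re λ ≤ −θ ξ²` for all real `ξ ≠ 0`
and some `θ > 0`, then `d > 0` and `a ≤ 0`; conversely, if `d > 0` and `a < 0`,
then for all sufficiently small `ξ ≠ 0` both roots satisfy `Re λ ≤ −(d/4) ξ²`. -/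
theorem viscoelastic_stability_condition (a d : ℝ) :
    ((∃ θ > 0, ∀ ξ : ℝ, ξ ≠ 0 → ∀ lam : ℂ,
        lam ^ 2 + (d : ℂ) * ξ ^ 2 * lam - (a : ℂ) * ξ ^ 2 = 0 →
        lam.re ≤ -θ * ξ ^ 2) →
      0 < d ∧ a ≤ 0)
    ∧ (0 < d → a < 0 →
      ∃ ξ₀ > 0, ∀ ξ : ℝ, ξ ≠ 0 → |ξ| < ξ₀ → ∀ lam : ℂ,
        lam ^ 2 + (d : ℂ) * ξ ^ 2 * lam - (a : ℂ) * ξ ^ 2 = 0 →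
        lam.re ≤ -(d / 4) * ξ ^ 2) := by
  constructor
  · rintro ⟨θ, hθ, h⟩
    by_cases hΔ : 0 ≤ d ^ 2 + 4 * a
    · -- real roots case
      set s := Real.sqrt (d ^ 2 + 4 * a) with hs
      have hs0 : 0 ≤ s := Real.sqrt_nonneg _
      have hs2 : s ^ 2 = d ^ 2 + 4 * a := Real.sq_sqrt hΔ
      have hs2c : ((s : ℂ)) ^ 2 = ((d : ℂ)) ^ 2 + 4 * a := by exact_mod_cast congrArg Complex.ofReal hs2
      have hroot : (((((-d + s) / 2 : ℝ)) : ℂ)) ^ 2 + (d : ℂ) * (1 : ℝ) ^ 2 * ((((-d + s) / 2 : ℝ)) : ℂ)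
          - (a : ℂ) * (1 : ℝ) ^ 2 = 0 := by
        push_cast
        linear_combination (1 / 4 : ℂ) * hs2c
      have := h 1 one_ne_zero _ hroot
      simp only [Complex.ofReal_re, one_pow, mul_one] at this
      constructor
      · nlinarith
      · nlinarith
    · -- complex roots case
      push_neg at hΔ
      set t := Real.sqrt (-(d ^ 2 + 4 * a)) with htdef
      have ht2 : t ^ 2 = -(d ^ 2 + 4 * a) := Real.sq_sqrt (by linarith)
      have htc : ((t : ℂ)) ^ 2 = -(((d : ℂ)) ^ 2 + 4 * a) := by
        exact_mod_cast congrArg Complex.ofReal ht2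
      set lam : ℂ := (-(d / 2) : ℝ) + ((t / 2 : ℝ) : ℂ) * Complex.I with hlam
      have hroot : lam ^ 2 + (d : ℂ) * (1 : ℝ) ^ 2 * lam - (a : ℂ) * (1 : ℝ) ^ 2 = 0 := by
        rw [hlam]
        push_cast
        linear_combination ((t : ℂ) ^ 2 / 4) * Complex.I_sq - (1 / 4 : ℂ) * htc
      have := h 1 one_ne_zero _ hroot
      have hre : lam.re = -(d / 2) := by
        simp [hlam]
      rw [hre] at this
      simp only [one_pow, mul_one] at this
      constructor
      · linarith
      · nlinarith
  · intro hd ha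
    have hsp : 0 < Real.sqrt (-a) := Real.sqrt_pos.mpr (by linarith)
    refine ⟨2 * Real.sqrt (-a) / d, by positivity, ?_⟩
    intro ξ hξ hξsmall lam heq
    have hsq : Real.sqrt (-a) ^ 2 = -a := Real.sq_sqrt (by linarith)
    have hx2 : ξ ^ 2 < (2 * Real.sqrt (-a) / d) ^ 2 := by
      rw [← sq_abs]
      exact pow_lt_pow_left₀ hξsmall (abs_nonneg ξ) two_ne_zero
    have hΔ : d ^ 2 * ξ ^ 2 + 4 * a < 0 := by
      have h1 : |ξ| * d < 2 * Real.sqrt (-a) := (lt_div_iff₀ hd).mp hξsmall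
      have h2 : (|ξ| * d) ^ 2 < (2 * Real.sqrt (-a)) ^ 2 := by
        apply pow_lt_pow_left₀ h1 (by positivity) two_ne_zero
      nlinarith [sq_abs ξ, hsq]
    have hξ2 : 0 < ξ ^ 2 := by positivity
    set r : ℝ := ξ ^ 2 * (d ^ 2 * ξ ^ 2 + 4 * a) / 4 with hrdef
    have hr : r < 0 := by
      apply div_neg_of_neg_of_pos
      · exact mul_neg_of_pos_of_neg hξ2 hΔ
      · norm_num
    set μ : ℂ := lam + ((d * ξ ^ 2 / 2 : ℝ) : ℂ) with hμ
    have hμsq : μ ^ 2 = ((r : ℝ) : ℂ) := by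
      rw [hμ, hrdef]
      push_cast
      linear_combination heq
    have hμre : μ.re = 0 := by
      have h1 : μ.re ^ 2 - μ.im ^ 2 = r := by
        have := congrArg Complex.re hμsq
        simpa [pow_two, Complex.mul_re] using this
      have h2 : μ.re * μ.im + μ.im * μ.re = 0 := by
        have := congrArg Complex.im hμsq
        simpa [pow_two, Complex.mul_im] using this
      by_contra hne
      have him : μ.im = 0 := by
        rcases mul_eq_zero.mp (by linarith : μ.re * μ.im = 0) with h | h
        · exact absurd h hne
        · exact h
      rw [him] at h1
      nlinarith [sq_nonneg μ.re]
    have hlre : lam.re = -(d * ξ ^ 2 / 2) := by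
      have : μ.re = lam.re + d * ξ ^ 2 / 2 := by
        rw [hμ, Complex.add_re, Complex.ofReal_re]
      rw [hμre] at *
      linarith [this]
    rw [hlre]
    nlinarith
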